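/- arXiv:1908.04357 — 3 statements merged into one kernel-verified Lean document; each statement's English description precedes it below -/
import Mathlib

section
/- Let $(a_k)$ and $(b_k)$ be sequences of positive real numbers both converging to $0$, with $a_k \le b_k$ for all $k$. Then $\liminf_{k\to\infty} a_{k+1}/a_k \le \limsup_{k\to\infty} b_{k+1}/b_k$. -/
open Filter

/-- Two-sequence lemma: positive sequences tending to 0 with `a k ≤ b k`;
the liminf of successive ratios of `a` is at most the limsup of successive
ratios of `b`, in the extended reals. -/
theorem stmt0 (a b : ℕ → ℝ) (ha : ∀ k, 0 < a k) (hb : ∀ k, 0 < b k)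
    (ha0 : Tendsto a atTop (nhds 0)) (hb0 : Tendsto b atTop (nhds 0))
    (hab : ∀ k, a k ≤ b k) :
    liminf (fun k => ((a (k + 1) / a k : ℝ) : EReal)) atTop ≤
      limsup (fun k => ((b (k + 1) / b k : ℝ) : EReal)) atTop := by
  by_contra hcon
  push_neg at hcon
  -- limsup of b-ratios is nonnegative
  have hL0 : (0 : EReal) ≤ limsup (fun k => ((b (k + 1) / b k : ℝ) : EReal)) atTop := by
    refine le_limsup_of_frequently_le (Frequently.of_forall fun k => ?_)
      (isBounded_le_of_top)
    have : (0:ℝ) ≤ b (k+1) / b k := le_of_lt (div_pos (hb _) (hb _))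
    exact_mod_cast this
  -- pick reals s < r between limsup and liminf
  obtain ⟨s, hs1, hs2⟩ := EReal.lt_iff_exists_real_btwn.mp hcon
  obtain ⟨r, hr1, hr2⟩ := EReal.lt_iff_exists_real_btwn.mp hs2
  have hs_pos : (0:ℝ) < s := by
    have : (0:EReal) < (s:EReal) := lt_of_le_of_lt hL0 hs1
    exact_mod_cast this
  have hsr : s < r := by exact_mod_cast hr1
  have hr_pos : (0:ℝ) < r := hs_pos.trans hsr
  -- eventual bounds
  have hA : ∀ᶠ k in atTop, (r:EReal) < ((a (k + 1) / a k : ℝ) : EReal) :=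
    eventually_lt_of_lt_liminf hr2
  have hB : ∀ᶠ k in atTop, ((b (k + 1) / b k : ℝ) : EReal) < (s:EReal) :=
    eventually_lt_of_limsup_lt hs1
  obtain ⟨N, hN⟩ := (hA.and hB).exists_forall_of_atTop
  have hAa : ∀ k ≥ N, r * a k < a (k+1) := by
    intro k hk
    have h1 : (r:EReal) < ((a (k + 1) / a k : ℝ) : EReal) := (hN k hk).1
    have h1' : r < a (k+1) / a k := by exact_mod_cast h1
    exact (lt_div_iff₀ (ha k)).mp h1'
  have hBb : ∀ k ≥ N, b (k+1) < s * b k := by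
    intro k hk
    have h1 : ((b (k + 1) / b k : ℝ) : EReal) < (s:EReal) := (hN k hk).2
    have h1' : b (k+1) / b k < s := by exact_mod_cast h1
    exact (div_lt_iff₀ (hb k)).mp h1'
  have hgeomA : ∀ m, r ^ m * a N ≤ a (N + m) := by
    intro m
    induction m with
    | zero => simp
    | succ m ih =>
      have h1 : r * a (N + m) < a (N + m + 1) := hAa _ (Nat.le_add_right _ _)
      calc r ^ (m+1) * a N = r * (r ^ m * a N) := by ring
        _ ≤ r * a (N + m) := by nlinarith
        _ ≤ a (N + (m+1)) := by rw [← Nat.add_assoc]; exact h1.le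
  have hgeomB : ∀ m, b (N + m) ≤ s ^ m * b N := by
    intro m
    induction m with
    | zero => simp
    | succ m ih =>
      have h1 : b (N + m + 1) < s * b (N + m) := hBb _ (Nat.le_add_right _ _)
      calc b (N + (m+1)) = b (N + m + 1) := by rw [Nat.add_assoc]
        _ ≤ s * b (N + m) := h1.le
        _ ≤ s * (s ^ m * b N) := by nlinarith
        _ = s ^ (m+1) * b N := by ring
  -- contradiction: (r/s)^m ≤ b N / a N for all m
  have hratio : 1 < r / s := (one_lt_div hs_pos).mpr hsr
  obtain ⟨m, hm⟩ := pow_unbounded_of_one_lt (b N / a N) hratio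
  have key : r ^ m * a N ≤ s ^ m * b N :=
    (hgeomA m).trans ((hab _).trans (hgeomB m))
  have hsm : (0:ℝ) < s ^ m := pow_pos hs_pos m
  have h1 : (r / s) ^ m ≤ b N / a N := by
    rw [div_pow, div_le_div_iff₀ hsm (ha N)]
    nlinarith [key, (ha N).le]
  exact absurd h1 (not_le.mpr hm)
end

section
/- Let $f$ be a face of $\mathcal{S}^n_+$ of the form $f = V\mathcal{S}^r_+ V^T$ where $V \in \mathbb{R}^{n\times r}$ has orthonormal columns, and let $W \in \mathcal{S}^n_+$ satisfy $WV = 0$ and $W + VV^T \succ 0$. Then $f = \mathcal{S}^n_+ \cap W^{\perp}$, i.e., a positive semidefinite matrix $X$ satisfies $\langle X, W \rangle = 0$ if and only if $X = VRV^T$ for some $R \in \mathcal{S}^r_+$. -/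
/-!
If `⟨X, W⟩ = 0` for positive semidefinite `X = Aᴴ A` and `W = Bᴴ B`, then `B Aᴴ` has zero
Frobenius norm, so `W X = 0`. With `P = V Vᵀ` the orthogonal projection onto the range of `V`,
`W P = 0` and `P² = P` give `(W + P)(X - P X) = W X = 0`, and invertibility of `W + P` forces
`X = P X`, hence `X = P X P = V (Vᵀ X V) Vᵀ` by symmetry.
Conversely `V R Vᵀ W = V R (W V)ᵀ = 0`.
-/

open Matrix

namespace Matrix

open scoped MatrixOrder ComplexOrder

theorem PosSemidef.mul_eq_zero_of_trace_mul_eq_zero {𝕜 n : Type*} [RCLike 𝕜] [Fintype n]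
    {A B : Matrix n n 𝕜} (hA : A.PosSemidef) (hB : B.PosSemidef) (h : (A * B).trace = 0) :
    B * A = 0 := by
  classical
  obtain ⟨C, rfl⟩ := CStarAlgebra.nonneg_iff_eq_star_mul_self.mp hA.nonneg
  obtain ⟨D, rfl⟩ := CStarAlgebra.nonneg_iff_eq_star_mul_self.mp hB.nonneg
  simp only [star_eq_conjTranspose] at h ⊢
  have hDC : D * Cᴴ = 0 := by
    rw [← trace_conjTranspose_mul_self_eq_zero_iff, conjTranspose_mul,
      conjTranspose_conjTranspose, ← h, Matrix.mul_assoc, trace_mul_comm,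
      trace_mul_comm (Cᴴ * C)]
    simp only [Matrix.mul_assoc]
  rw [Matrix.mul_assoc, ← Matrix.mul_assoc D, hDC, Matrix.zero_mul, Matrix.mul_zero]

section Projection

variable {R m n : Type*} [CommRing R] [Fintype m] [Fintype n] {V : Matrix m n R}

theorem mul_transpose_mul_eq_self_of_mul_eq_zero [DecidableEq m] [DecidableEq n]
    {W X : Matrix m m R} (hV : Vᵀ * V = 1) (hWV : W * V = 0) (hunit : IsUnit (W + V * Vᵀ))
    (hWX : W * X = 0) :
    V * Vᵀ * X = X := by
  have hP : V * Vᵀ * (V * Vᵀ) = V * Vᵀ := by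
    rw [Matrix.mul_assoc, ← Matrix.mul_assoc Vᵀ, hV, Matrix.one_mul]
  have hWP : W * (V * Vᵀ) = 0 := by rw [← Matrix.mul_assoc, hWV, Matrix.zero_mul]
  have h : (W + V * Vᵀ) * (X - V * Vᵀ * X) = 0 := by
    rw [Matrix.add_mul, Matrix.mul_sub, Matrix.mul_sub, ← Matrix.mul_assoc W, hWP, hWX,
      ← Matrix.mul_assoc (V * Vᵀ), hP, Matrix.zero_mul, sub_zero, zero_add, sub_self]
  exact (sub_eq_zero.mp (hunit.mul_right_eq_zero.mp h)).symm

theorem eq_mul_mul_transpose_of_isSymm {X : Matrix m m R} (hX : X.IsSymm)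
    (hVX : V * Vᵀ * X = X) : X = V * (Vᵀ * X * V) * Vᵀ := by
  have hXV : X * (V * Vᵀ) = X := by
    simpa [transpose_mul, hX.eq, Matrix.mul_assoc] using congrArg transpose hVX
  calc X = V * Vᵀ * (X * (V * Vᵀ)) := by rw [hXV, hVX]
    _ = V * (Vᵀ * X * V) * Vᵀ := by simp only [Matrix.mul_assoc]

end Projection

end Matrix

/-- Characterization of a face of the PSD cone: with `V` having orthonormal columns,
`W ⪰ 0`, `WV = 0` and `W + VVᵀ ≻ 0`, a PSD matrix `X` satisfies `⟨X, W⟩ = 0` iff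
`X = V R Vᵀ` for some PSD `R`. -/
theorem stmt10 {n r : ℕ} (V : Matrix (Fin n) (Fin r) ℝ) (hV : Vᵀ * V = 1)
    (W : Matrix (Fin n) (Fin n) ℝ) (hW : W.PosSemidef) (hWV : W * V = 0)
    (hWVV : (W + V * Vᵀ).PosDef) :
    ∀ X : Matrix (Fin n) (Fin n) ℝ, X.PosSemidef →
      ((X * W).trace = 0 ↔
        ∃ R : Matrix (Fin r) (Fin r) ℝ, R.PosSemidef ∧ X = V * R * Vᵀ) := by
  intro X hX
  constructor
  · intro htr
    have hVX := mul_transpose_mul_eq_self_of_mul_eq_zero hV hWV hWVV.isUnit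
      (hX.mul_eq_zero_of_trace_mul_eq_zero hW htr)
    refine ⟨Vᵀ * X * V, by simpa using hX.conjTranspose_mul_mul_same V, ?_⟩
    exact eq_mul_mul_transpose_of_isSymm (isHermitian_iff_isSymm.mp hX.isHermitian) hVX
  · rintro ⟨R, -, rfl⟩
    have hVW : Vᵀ * W = 0 := by
      rw [← (isHermitian_iff_isSymm.mp hW.isHermitian).eq, ← transpose_mul, hWV, transpose_zero]
    rw [Matrix.mul_assoc, hVW, Matrix.mul_zero, trace_zero]
end

section
/- Exactly one of the following holds for a nonempty spectrahedron $\mathcal{F} = \{X \succeq 0 : \mathcal{A}(X) = b\}$: (i) $\mathcal{F}$ contains a positive definite matrix; (ii) there exists a nonzero $W = \mathcal{A}^*(y)$ with $W \succeq 0$ and $y^Tb = 0$. -/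
open Matrix

/-!
If no feasible matrix is positive definite, the open convex cone of matrices with positive
quadratic form misses the affine fibre `A⁻¹(b)` (symmetrise, using `A Xᵀ = A X`). A separating
hyperplane gives a continuous functional that is negative on the cone and bounded below on the
fibre, hence vanishes on `ker A`; as the positive semidefinite point `X₀` of the fibre lies in
the closure of the cone, the functional also vanishes at `X₀`. Factoring it through `A` gives `y`,
and the matrix representing it under the trace pairing is `W = A* y`. Conversely, `tr (W X) > 0`
for `W ⪰ 0`, `W ≠ 0` and `X ≻ 0`, so the two alternatives exclude each other.
-/

section Separation

variable {E F : Type*} [TopologicalSpace E] [AddCommGroup E] [IsTopologicalAddGroup E]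
  [Module ℝ E] [ContinuousSMul ℝ E] [AddCommGroup F] [Module ℝ F]

theorem exists_strongDual_neg_on_cone_of_disjoint_fiber {C : Set E} (hCo : IsOpen C)
    (hCc : Convex ℝ C) (hcone : ∀ c : ℝ, 0 < c → ∀ x ∈ C, c • x ∈ C) (ψ : E →ₗ[ℝ] F)
    {x₀ : E} (hx₀ : x₀ ∈ closure C) (hdisj : ∀ x ∈ C, ψ x ≠ ψ x₀) :
    ∃ f : StrongDual ℝ E, (∀ x ∈ C, f x < 0) ∧ f x₀ = 0 ∧ ∀ z, ψ z = 0 → f z = 0 := by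
  have hfiber : Convex ℝ {x | ψ x = ψ x₀} :=
    (convex_singleton (ψ x₀)).linear_preimage ψ
  obtain ⟨f, u, hfC, hfiber⟩ := geometric_hahn_banach_open hCc hCo hfiber
    (Set.disjoint_left.mpr hdisj)
  have hle : ∀ x ∈ closure C, f x ≤ u := fun x hx =>
    closure_lt_subset_le f.continuous continuous_const (closure_mono hfC hx)
  have hscale : ∀ c : ℝ, 0 < c → f (c • x₀) ≤ u := fun c hc =>
    hle _ (map_mem_closure (continuous_const_smul c) hx₀ fun x hx => hcone c hc x hx)
  have hfx₀ : f x₀ = u := le_antisymm (hle x₀ hx₀) (hfiber x₀ rfl)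
  have hu : u = 0 := by
    have h2 := hscale 2 two_pos
    have h2' := hscale 2⁻¹ (by norm_num)
    simp only [map_smul, smul_eq_mul, hfx₀] at h2 h2'
    linarith
  refine ⟨f, fun x hx => hu ▸ hfC x hx, hu ▸ hfx₀, fun z hz => ?_⟩
  have h := hfiber (x₀ - f z • z) (by simp [hz])
  simp only [map_sub, map_smul, smul_eq_mul, hfx₀] at h
  nlinarith [sq_nonneg (f z)]

end Separation

theorem exists_eq_dotProduct_of_ker_le {𝕜 E ι : Type*} [Field 𝕜] [AddCommGroup E] [Module 𝕜 E]
    [Fintype ι] (A : E →ₗ[𝕜] ι → 𝕜) (g : E →ₗ[𝕜] 𝕜) (h : LinearMap.ker A ≤ LinearMap.ker g) :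
    ∃ y : ι → 𝕜, ∀ x, g x = y ⬝ᵥ A x := by
  have hker : ⨅ i, LinearMap.ker ((LinearMap.proj i).comp A) ≤ LinearMap.ker g := by
    rwa [← LinearMap.ker_pi, LinearMap.pi_proj_comp]
  obtain ⟨y, hy⟩ :=
    (Submodule.mem_span_range_iff_exists_fun 𝕜).1 (mem_span_of_iInf_ker_le_ker hker)
  refine ⟨y, fun x => ?_⟩
  rw [← hy]
  simp [dotProduct]

namespace Matrix

variable {ι : Type*}

section PosQuadCone

variable [Fintype ι]

/-- Symmetry is not required: this makes the cone open in the space of all matrices, and its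
symmetric members are exactly the positive definite matrices. -/
def posQuadCone (ι : Type*) [Fintype ι] : Set (Matrix ι ι ℝ) :=
  {M | ∀ v : ι → ℝ, v ≠ 0 → 0 < v ⬝ᵥ M *ᵥ v}

theorem mem_posQuadCone_iff_forall_sphere {M : Matrix ι ι ℝ} :
    M ∈ posQuadCone ι ↔ ∀ v ∈ Metric.sphere (0 : ι → ℝ) 1, 0 < v ⬝ᵥ M *ᵥ v := by
  refine ⟨fun h v hv => h v fun h0 => by simp [h0] at hv, fun h v hv => ?_⟩
  have hnorm : 0 < ‖v‖ := norm_pos_iff.mpr hv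
  have hunit : ‖v‖⁻¹ • v ∈ Metric.sphere (0 : ι → ℝ) 1 := by
    simp [norm_smul, hnorm.ne']
  have := h _ hunit
  rw [mulVec_smul, dotProduct_smul, smul_dotProduct, smul_eq_mul, smul_eq_mul] at this
  have hinv : 0 < ‖v‖⁻¹ * ‖v‖⁻¹ := by positivity
  exact pos_of_mul_pos_right (by simpa [mul_assoc] using this) hinv.le

theorem isOpen_posQuadCone : IsOpen (posQuadCone ι) := by
  refine isOpen_iff_mem_nhds.mpr fun M hM => ?_
  rw [mem_posQuadCone_iff_forall_sphere] at hM
  have hcont : Continuous fun p : Matrix ι ι ℝ × (ι → ℝ) => p.2 ⬝ᵥ p.1 *ᵥ p.2 :=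
    continuous_snd.dotProduct (continuous_fst.matrix_mulVec continuous_snd)
  have hnear := (isCompact_sphere (0 : ι → ℝ) 1).eventually_forall_of_forall_eventually
    (P := fun N v => 0 < v ⬝ᵥ N *ᵥ v) fun v hv =>
      (hcont.tendsto (M, v)).eventually_const_lt (hM v hv)
  filter_upwards [hnear] with N hN
  exact mem_posQuadCone_iff_forall_sphere.mpr hN

theorem convex_posQuadCone : Convex ℝ (posQuadCone ι) := by
  intro M hM N hN a b ha hb hab v hv
  rw [add_mulVec, smul_mulVec, smul_mulVec, dotProduct_add, dotProduct_smul, dotProduct_smul,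
    smul_eq_mul, smul_eq_mul]
  rcases ha.eq_or_lt with rfl | ha
  · simpa [(zero_add b).symm.trans hab] using hN v hv
  · exact add_pos_of_pos_of_nonneg (mul_pos ha (hM v hv)) (mul_nonneg hb (hN v hv).le)

theorem smul_mem_posQuadCone {c : ℝ} (hc : 0 < c) {M : Matrix ι ι ℝ}
    (hM : M ∈ posQuadCone ι) : c • M ∈ posQuadCone ι := fun v hv => by
  rw [smul_mulVec, dotProduct_smul, smul_eq_mul]
  exact mul_pos hc (hM v hv)

theorem transpose_mem_posQuadCone {M : Matrix ι ι ℝ} (hM : M ∈ posQuadCone ι) :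
    Mᵀ ∈ posQuadCone ι := fun v hv => by
  rw [mulVec_transpose, dotProduct_comm, ← dotProduct_mulVec]
  exact hM v hv

theorem posDef_iff_mem_posQuadCone {M : Matrix ι ι ℝ} (hM : M.IsHermitian) :
    M.PosDef ↔ M ∈ posQuadCone ι :=
  ⟨fun h v hv => by simpa using h.dotProduct_mulVec_pos hv,
    fun h => .of_dotProduct_mulVec_pos hM fun v hv => by simpa using h v hv⟩

theorem PosDef.mem_posQuadCone {M : Matrix ι ι ℝ} (hM : M.PosDef) : M ∈ posQuadCone ι :=
  (posDef_iff_mem_posQuadCone hM.isHermitian).mp hM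

theorem PosSemidef.mem_closure_posQuadCone [DecidableEq ι] {M : Matrix ι ι ℝ}
    (hM : M.PosSemidef) : M ∈ closure (posQuadCone ι) := by
  have hlim : Filter.Tendsto (fun ε : ℝ => M + ε • 1) (nhdsWithin 0 (Set.Ioi 0)) (nhds M) := by
    have : Continuous fun ε : ℝ => M + ε • (1 : Matrix ι ι ℝ) := by fun_prop
    simpa using (this.tendsto 0).mono_left nhdsWithin_le_nhds
  refine mem_closure_of_tendsto hlim (eventually_nhdsWithin_of_forall fun ε hε => ?_)
  rw [add_comm]
  exact ((PosDef.one.smul (Set.mem_Ioi.mp hε)).add_posSemidef hM).mem_posQuadCone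

theorem posSemidef_of_trace_mul_pos {W : Matrix ι ι ℝ} (hW : W.IsHermitian)
    (h : ∀ X ∈ posQuadCone ι, 0 < (W * X).trace) : W.PosSemidef := by
  classical
  refine .of_dotProduct_mulVec_nonneg hW fun v => ?_
  have hv : (vecMulVec v v).PosSemidef := by simpa using posSemidef_vecMulVec_self_star v
  have hclosure := closure_lt_subset_le continuous_const
    (continuous_const.matrix_mul continuous_id).matrix_trace
    (closure_mono h hv.mem_closure_posQuadCone)
  simpa [mul_vecMulVec, trace_vecMulVec, dotProduct_comm] using hclosure

open scoped MatrixOrder in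
theorem trace_mul_pos_of_posSemidef_of_posDef {W X : Matrix ι ι ℝ} (hW : W.PosSemidef)
    (hW0 : W ≠ 0) (hX : X.PosDef) : 0 < (W * X).trace := by
  classical
  obtain ⟨D, rfl⟩ := CStarAlgebra.nonneg_iff_eq_star_mul_self.mp hX.posSemidef.nonneg
  have hD : IsUnit D := isUnit_of_mul_isUnit_right hX.isUnit
  have hDWD : (D * W * star D).PosSemidef := hW.mul_mul_conjTranspose_same D
  have hDWD0 : D * W * star D ≠ 0 := by
    rwa [Ne, (hD.star : IsUnit (star D)).mul_left_eq_zero, hD.mul_right_eq_zero]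
  rw [← Matrix.mul_assoc, trace_mul_cycle]
  exact hDWD.trace_nonneg.lt_of_ne' (hDWD.trace_eq_zero_iff.not.mpr hDWD0)

end PosQuadCone

section TraceDual

variable {R : Type*} [CommSemiring R] [DecidableEq ι]

def traceDual (g : Matrix ι ι R →ₗ[R] R) : Matrix ι ι R :=
  of fun i j => g (single j i 1)

theorem trace_traceDual_mul [Fintype ι] (g : Matrix ι ι R →ₗ[R] R) (X : Matrix ι ι R) :
    (traceDual g * X).trace = g X := by
  let t : Matrix ι ι R →ₗ[R] R :=
    (traceLinearMap ι R R).comp (mulLeftLinearMap ι R (traceDual g))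
  have ht : t = g := by
    refine ext_linearMap (R := R) fun i j => LinearMap.ext_ring ?_
    simp [t, trace_mul_single, traceDual]
  exact LinearMap.congr_fun ht X

theorem isSymm_traceDual {g : Matrix ι ι R →ₗ[R] R} (hg : ∀ X, g Xᵀ = g X) :
    (traceDual g).IsSymm := by
  ext i j
  simp [traceDual, ← hg (single i j 1), transpose_single]

end TraceDual

theorem exists_posSemidef_certificate {κ : Type*} [Fintype ι] [DecidableEq ι] [Fintype κ]
    (A : Matrix ι ι ℝ →ₗ[ℝ] κ → ℝ) (hA : ∀ X, A Xᵀ = A X) {X₀ : Matrix ι ι ℝ}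
    (hX₀ : X₀.PosSemidef) (h : ∀ X : Matrix ι ι ℝ, X.PosDef → A X ≠ A X₀) :
    ∃ (y : κ → ℝ) (W : Matrix ι ι ℝ), W ≠ 0 ∧ W.PosSemidef ∧
      (∀ X, (W * X).trace = y ⬝ᵥ A X) ∧ y ⬝ᵥ A X₀ = 0 := by
  have hdisj : ∀ M ∈ posQuadCone ι, A M ≠ A X₀ := fun M hM hAM => by
    have hS : (2⁻¹ : ℝ) • M + (2⁻¹ : ℝ) • Mᵀ ∈ posQuadCone ι :=
      convex_posQuadCone hM (transpose_mem_posQuadCone hM) (by norm_num) (by norm_num)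
        (by norm_num)
    have hSsymm : ((2⁻¹ : ℝ) • M + (2⁻¹ : ℝ) • Mᵀ).IsHermitian := by
      simp [IsSymm, add_comm]
    refine h _ ((posDef_iff_mem_posQuadCone hSsymm).mpr hS) ?_
    rw [map_add, map_smul, map_smul, hA, ← add_smul, hAM]
    norm_num
  obtain ⟨f, hfC, hfX₀, hfker⟩ := exists_strongDual_neg_on_cone_of_disjoint_fiber
    isOpen_posQuadCone convex_posQuadCone (fun c hc M hM => smul_mem_posQuadCone hc hM) A
    hX₀.mem_closure_posQuadCone hdisj
  set g : Matrix ι ι ℝ →ₗ[ℝ] ℝ := -(f : Matrix ι ι ℝ →ₗ[ℝ] ℝ)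
  obtain ⟨y, hy⟩ := exists_eq_dotProduct_of_ker_le A g fun z hz => by simp [g, hfker z hz]
  have hpos : ∀ X ∈ posQuadCone ι, 0 < (traceDual g * X).trace := fun X hX => by
    simpa [trace_traceDual_mul, g] using hfC X hX
  have hsymm : (traceDual g).IsSymm := isSymm_traceDual fun X => by rw [hy, hy, hA]
  refine ⟨y, traceDual g, fun h0 => ?_, posSemidef_of_trace_mul_pos (by simpa using hsymm) hpos,
    fun X => (trace_traceDual_mul g X).trans (hy X), by simp [← hy, g, hfX₀]⟩
  simpa [h0] using hpos 1 PosDef.one.mem_posQuadCone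

end Matrix

/-- Theorem of the alternative underlying facial reduction: for a nonempty
spectrahedron `{X ⪰ 0 : A X = b}`, exactly one of the following holds:
(i) it contains a positive definite matrix; (ii) there is a nonzero PSD
`W = A* y` with `yᵀ b = 0`. -/
theorem stmt13 {n m : ℕ} (A : Matrix (Fin n) (Fin n) ℝ →ₗ[ℝ] (Fin m → ℝ))
    (hA : ∀ X : Matrix (Fin n) (Fin n) ℝ, A Xᵀ = A X)
    (b : Fin m → ℝ)
    (hne : ∃ X : Matrix (Fin n) (Fin n) ℝ, X.PosSemidef ∧ A X = b) :
    Xor' (∃ X : Matrix (Fin n) (Fin n) ℝ, X.PosDef ∧ A X = b)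
      (∃ (y : Fin m → ℝ) (W : Matrix (Fin n) (Fin n) ℝ), W ≠ 0 ∧ W.PosSemidef ∧
        (∀ X : Matrix (Fin n) (Fin n) ℝ, X.IsHermitian →
          (W * X).trace = ∑ i, y i * A X i) ∧
        ∑ i, y i * b i = 0) := by
  obtain ⟨X₀, hX₀, rfl⟩ := hne
  by_cases hpd : ∃ X : Matrix (Fin n) (Fin n) ℝ, X.PosDef ∧ A X = A X₀
  · refine Or.inl ⟨hpd, ?_⟩
    rintro ⟨y, W, hW0, hW, htr, hyb⟩
    obtain ⟨X, hX, hAX⟩ := hpd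
    refine (Matrix.trace_mul_pos_of_posSemidef_of_posDef hW hW0 hX).ne' ?_
    rw [htr X hX.isHermitian, hAX, hyb]
  · push Not at hpd
    obtain ⟨y, W, hW0, hW, htr, hyb⟩ := Matrix.exists_posSemidef_certificate A hA hX₀ hpd
    exact Or.inr ⟨⟨y, W, hW0, hW, fun X _ => htr X, hyb⟩, fun ⟨X, hX, hAX⟩ => hpd X hX hAX⟩
end
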